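/- Let k ≥ 2 and N ≥ 2k - 1, and let τ: {0,1}* -> {0,1,#}* be the N-uniform substitution τ(0) = # 0^{k-2} 0^{N-2k+2} 0^{k-1} and τ(1) = # 0^{k-2} 1^{N-2k+2} 0^{k-1}. If u_0 ... u_{e-1} is an abelian power occurring in an infinite binary word w, then τ(u_0) ... τ(u_{e-1}) is a k-abelian power occurring in τ(w). -/

import Mathlib

/-- Abelian equivalence of words: each letter occurs equally often. -/
def AbEq {A : Type*} [DecidableEq A] (u v : List A) : Prop :=
  ∀ a : A, u.count a = v.count a

/-- `u` occurs as a (contiguous) factor of the infinite word `x`. -/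
def OccursIn {A : Type*} (x : ℕ → A) (u : List A) : Prop :=
  ∃ i, u = (List.range u.length).map fun j => x (i + j)

/-- The number of (possibly overlapping) occurrences of `z` as a factor of `u`. -/
def FactorCount {A : Type*} [DecidableEq A] (u z : List A) : ℕ :=
  (List.range (u.length + 1 - z.length)).countP fun i =>
    decide ((u.drop i).take z.length = z)

/-- `k`-abelian equivalence: every nonempty word of length at most `k` occurs
equally often as a factor of `u` and of `v`. -/
def KAbEq {A : Type*} [DecidableEq A] (k : ℕ) (u v : List A) : Prop :=
  ∀ z : List A, z ≠ [] → z.length ≤ k → FactorCount u z = FactorCount v z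

/-- The `N`-uniform substitution `τ(0) = # 0^{k-2} 0^{N-2k+2} 0^{k-1}`,
`τ(1) = # 0^{k-2} 1^{N-2k+2} 0^{k-1}`, with `# = 2` in `Fin 3`. -/
def tauLetter (k N : ℕ) (a : Fin 2) : List (Fin 3) :=
  if a = 0 then
    (2 : Fin 3) :: (List.replicate (k - 2) 0 ++ List.replicate (N + 2 - 2 * k) 0
      ++ List.replicate (k - 1) 0)
  else
    (2 : Fin 3) :: (List.replicate (k - 2) 0 ++ List.replicate (N + 2 - 2 * k) 1
      ++ List.replicate (k - 1) 0)

/-- `τ` extended to finite binary words as a monoid morphism. -/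
def tauStar (k N : ℕ) (x : List (Fin 2)) : List (Fin 3) :=
  (x.map (tauLetter k N)).flatten

/-- `τ(w)`, applying `τ` letterwise to the infinite binary word `w`. -/
def tauWord (k N : ℕ) (w : ℕ → Fin 2) (n : ℕ) : Fin 3 :=
  (tauLetter k N (w (n / N))).getD (n % N) 0

/-!
Every `τ(a)` begins with the same `k - 1` letters `# 0^{k-2}` and ends with the same `k - 1`
letters `0^{k-1}`. So an occurrence in `τ(x)` of a word `z` of length at most `k` lies inside a
single block `τ(a)` or across one of the `|x| - 1` junctions, and all junctions look alike
through a window of width `|z| - 1` on each side. Hence the number of occurrences of `z` in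
`τ(x)` is `∑ₐ |x|ₐ |τ(a)|_z + (|x| - 1) c_z` for a constant `c_z`, which depends only on the
Parikh vector of `x`. The occurrence in `τ(w)` comes from `τ` being `N`-uniform.
-/

namespace List

variable {α : Type*} {l₁ l₂ : List α} {n : ℕ}

lemma IsPrefix.take_eq_take (h : l₁ <+: l₂) (hn : n ≤ l₁.length) : l₂.take n = l₁.take n := by
  conv_rhs => rw [prefix_iff_eq_take.mp h]
  rw [take_take, Nat.min_eq_left hn]

lemma IsSuffix.drop_length_sub_eq (h : l₁ <:+ l₂) (hn : n ≤ l₁.length) :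
    l₂.drop (l₂.length - n) = l₁.drop (l₁.length - n) := by
  have hlen := h.length_le
  conv_rhs => rw [suffix_iff_eq_drop.mp h]
  rw [drop_drop, length_drop]
  congr 1
  omega

end List

section FactorCount

variable {A : Type*} [DecidableEq A] {s t z : List A}

lemma factorCount_append_eq_factorCount_take_add (hz : z ≠ [])
    (ht : z.length - 1 ≤ t.length) :
    FactorCount (s ++ t) z = FactorCount (s ++ t.take (z.length - 1)) z + FactorCount t z := by
  have hn : 1 ≤ z.length := List.length_pos_iff.mpr hz
  unfold FactorCount
  have h1 : (s ++ t).length + 1 - z.length = s.length + (t.length + 1 - z.length) := by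
    rw [List.length_append]; omega
  rw [h1, List.range_add, List.countP_append]
  congr 1
  · have h2 : (s ++ t.take (z.length - 1)).length + 1 - z.length = s.length := by
      simp only [List.length_append, List.length_take]; omega
    rw [h2]
    refine List.countP_congr fun i hi => ?_
    simp only [List.mem_range] at hi
    have key : ((s ++ t).drop i).take z.length
        = ((s ++ t.take (z.length - 1)).drop i).take z.length := by
      rw [List.drop_append_of_le_length (hi.le),
          List.drop_append_of_le_length (hi.le),
          List.take_append, List.take_append, List.take_take]
      congr 1
      rw [List.length_drop, Nat.min_eq_left (by omega)]
    simp [key]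
  · rw [List.countP_map]
    refine List.countP_congr fun i hi => ?_
    simp [Function.comp, List.drop_length_add_append]

lemma factorCount_append_eq_add_factorCount_drop (hz : z ≠ [])
    (hs : z.length - 1 ≤ s.length) :
    FactorCount (s ++ t) z
      = FactorCount s z + FactorCount (s.drop (s.length - (z.length - 1)) ++ t) z := by
  have hn : 1 ≤ z.length := List.length_pos_iff.mpr hz
  unfold FactorCount
  have h1 : (s ++ t).length + 1 - z.length = (s.length + 1 - z.length) + t.length := by
    rw [List.length_append]; omega
  rw [h1, List.range_add, List.countP_append]
  congr 1
  · refine List.countP_congr fun i hi => ?_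
    simp only [List.mem_range] at hi
    have key : ((s ++ t).drop i).take z.length = (s.drop i).take z.length := by
      rw [List.drop_append_of_le_length (by omega),
          List.take_append_of_le_length (by rw [List.length_drop]; omega)]
    simp [key]
  · have h2 : (s.drop (s.length - (z.length - 1)) ++ t).length + 1 - z.length = t.length := by
      simp only [List.length_append, List.length_drop]; omega
    rw [h2, List.countP_map]
    refine List.countP_congr fun i hi => ?_
    have key : (s.drop (s.length - (z.length - 1)) ++ t).drop i
        = (s ++ t).drop ((s.length + 1 - z.length) + i) := by
      rw [← List.drop_append_of_le_length (by omega), List.drop_drop]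
      congr 1
      omega
    simp [Function.comp, key]


lemma factorCount_append (hz : z ≠ []) (hs : z.length - 1 ≤ s.length)
    (ht : z.length - 1 ≤ t.length) :
    FactorCount (s ++ t) z = FactorCount s z
      + FactorCount (s.drop (s.length - (z.length - 1)) ++ t.take (z.length - 1)) z
      + FactorCount t z := by
  rw [factorCount_append_eq_factorCount_take_add hz ht,
    factorCount_append_eq_add_factorCount_drop hz hs]

end FactorCount

section Substitution

variable {α β : Type*} {σ : α → List β} {p s : List β}

lemma factorCount_flatMap [DecidableEq β] (hp : ∀ a, p <+: σ a) (hs : ∀ a, s <:+ σ a)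
    {z : List β} (hz : z ≠ []) (hzp : z.length - 1 ≤ p.length)
    (hzs : z.length - 1 ≤ s.length) {x : List α} (hx : x ≠ []) :
    FactorCount (x.flatMap σ) z = (x.map fun a => FactorCount (σ a) z).sum + (x.length - 1)
      * FactorCount (s.drop (s.length - (z.length - 1)) ++ p.take (z.length - 1)) z := by
  induction x with
  | nil => exact absurd rfl hx
  | cons a x ih =>
    rcases x with _ | ⟨b, x⟩
    · simp
    have hpb : p <+: (b :: x).flatMap σ := (hp b).trans (List.prefix_append _ _)
    rw [List.flatMap_cons, factorCount_append hz (hzp.trans (hp a).length_le)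
        (hzp.trans hpb.length_le), (hs a).drop_length_sub_eq hzs, hpb.take_eq_take hzp,
      ih (List.cons_ne_nil b x)]
    simp only [List.map_cons, List.sum_cons, List.length_cons, Nat.add_sub_cancel]
    ring

lemma kAbEq_flatMap_of_perm [DecidableEq β] {k : ℕ} (hp : ∀ a, p <+: σ a)
    (hs : ∀ a, s <:+ σ a) (hpk : k - 1 ≤ p.length) (hsk : k - 1 ≤ s.length)
    {x y : List α} (hxy : x.Perm y) : KAbEq k (x.flatMap σ) (y.flatMap σ) := by
  intro z hz hzk
  rcases eq_or_ne x [] with rfl | hx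
  · rw [hxy.nil_eq.symm]
  have hy : y ≠ [] := by rintro rfl; exact hx hxy.eq_nil
  rw [factorCount_flatMap hp hs hz (by omega) (by omega) hx,
    factorCount_flatMap hp hs hz (by omega) (by omega) hy, (hxy.map _).sum_eq, hxy.length_eq]

lemma length_flatMap_of_uniform {N : ℕ} (hσ : ∀ a, (σ a).length = N) (x : List α) :
    (x.flatMap σ).length = N * x.length := by
  simp [List.length_flatMap, hσ, mul_comm]

lemma map_range_getD_div_mod {N : ℕ} (hσ : ∀ a, (σ a).length = N) (d : β) (w : ℕ → α)
    (m : ℕ) :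
    (List.range N).map (fun j => (σ (w ((m * N + j) / N))).getD ((m * N + j) % N) d)
      = σ (w m) := by
  refine List.ext_getElem (by simp [hσ]) fun j hj _ => ?_
  have hjN : j < N := by simpa using hj
  have hdiv : (m * N + j) / N = m := by
    rw [Nat.mul_comm, Nat.mul_add_div (by omega), Nat.div_eq_of_lt hjN, Nat.add_zero]
  have hmod : (m * N + j) % N = j := by
    rw [Nat.mul_comm, Nat.mul_add_mod, Nat.mod_eq_of_lt hjN]
  rw [List.getElem_map, List.getElem_range, hdiv, hmod, List.getD_eq_getElem]

lemma flatMap_map_range {N : ℕ} (hσ : ∀ a, (σ a).length = N) (d : β) (w : ℕ → α) (i n : ℕ) :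
    ((List.range n).map fun j => w (i + j)).flatMap σ = (List.range (N * n)).map
      fun j => (σ (w ((i * N + j) / N))).getD ((i * N + j) % N) d := by
  induction n with
  | zero => simp
  | succ n ih =>
    rw [List.range_succ, List.map_append, List.flatMap_append, ih, Nat.mul_succ, List.range_add,
      List.map_append, List.map_map, List.map_singleton, List.flatMap_singleton,
      ← map_range_getD_div_mod hσ d w (i + n)]
    congr 2
    funext j
    rw [Function.comp_apply, show i * N + (N * n + j) = (i + n) * N + j by ring]

lemma occursIn_flatMap {N : ℕ} (hσ : ∀ a, (σ a).length = N) (d : β) {w : ℕ → α}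
    {v : List α} (hv : OccursIn w v) :
    OccursIn (fun n => (σ (w (n / N))).getD (n % N) d) (v.flatMap σ) := by
  obtain ⟨i, hi⟩ := hv
  refine ⟨i * N, ?_⟩
  rw [length_flatMap_of_uniform hσ]
  conv_lhs => rw [hi]
  exact flatMap_map_range hσ d w i v.length

end Substitution

section Tau

variable {k N : ℕ}

lemma tauLetter_length (hk : 2 ≤ k) (hN : 2 * k - 1 ≤ N) (a : Fin 2) :
    (tauLetter k N a).length = N := by
  unfold tauLetter; split <;> simp <;> omega

lemma tauLetter_prefix (a : Fin 2) :
    (2 :: List.replicate (k - 2) 0) <+: tauLetter k N a := by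
  unfold tauLetter
  split <;>
    exact List.cons_prefix_cons.mpr ⟨rfl, (List.prefix_append _ _).trans (List.prefix_append _ _)⟩

lemma tauLetter_suffix (a : Fin 2) : List.replicate (k - 1) 0 <:+ tauLetter k N a := by
  unfold tauLetter; split <;> exact List.suffix_append (2 :: (_ ++ _)) _

lemma tauStar_eq_flatMap (x : List (Fin 2)) : tauStar k N x = x.flatMap (tauLetter k N) := rfl

lemma tauStar_length (hk : 2 ≤ k) (hN : 2 * k - 1 ≤ N) (x : List (Fin 2)) :
    (tauStar k N x).length = N * x.length :=
  length_flatMap_of_uniform (tauLetter_length hk hN) x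

lemma kAbEq_tauStar_of_abEq (hk : 2 ≤ k) {x y : List (Fin 2)} (h : AbEq x y) :
    KAbEq k (tauStar k N x) (tauStar k N y) :=
  kAbEq_flatMap_of_perm tauLetter_prefix tauLetter_suffix (by simp; omega) (by simp)
    (List.perm_iff_count.mpr h)

lemma occursIn_tauWord (hk : 2 ≤ k) (hN : 2 * k - 1 ≤ N) {w : ℕ → Fin 2} {v : List (Fin 2)}
    (h : OccursIn w v) : OccursIn (tauWord k N w) (tauStar k N v) :=
  occursIn_flatMap (tauLetter_length hk hN) 0 h

end Tau

theorem tau_image_of_abelian_power_is_kAbelian_power_general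
    (k N : ℕ) (hk : 2 ≤ k) (hN : 2 * k - 1 ≤ N)
    (w : ℕ → Fin 2) (e m : ℕ)
    (u : ℕ → List (Fin 2))
    (hlen : ∀ i < e, (u i).length = m)
    (hab : ∀ i < e, AbEq (u i) (u 0))
    (hocc : OccursIn w (((List.range e).map u).flatten)) :
    (∀ i < e, (tauStar k N (u i)).length = N * m) ∧
    (∀ i < e, KAbEq k (tauStar k N (u i)) (tauStar k N (u 0))) ∧
    OccursIn (tauWord k N w) (((List.range e).map fun i => tauStar k N (u i)).flatten) := by
  refine ⟨fun i hi => by rw [tauStar_length hk hN, hlen i hi],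
    fun i hi => kAbEq_tauStar_of_abEq hk (hab i hi), ?_⟩
  have himage : ((List.range e).map fun i => tauStar k N (u i)).flatten
      = tauStar k N ((List.range e).map u).flatten := by
    simp only [tauStar_eq_flatMap, ← List.flatMap_def, List.flatMap_assoc]
  exact himage ▸ occursIn_tauWord hk hN hocc

/-- If `u_0 ⋯ u_{e-1}` is an abelian power occurring in the infinite binary word
`w`, then `τ(u_0) ⋯ τ(u_{e-1})` is a `k`-abelian power occurring in `τ(w)`. -/
theorem tau_image_of_abelian_power_is_kAbelian_power
    (k N : ℕ) (hk : 2 ≤ k) (hN : 2 * k - 1 ≤ N)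
    (w : ℕ → Fin 2) (e m : ℕ) (he : 0 < e) (hm : 0 < m)
    (u : ℕ → List (Fin 2))
    (hlen : ∀ i < e, (u i).length = m)
    (hab : ∀ i < e, AbEq (u i) (u 0))
    (hocc : OccursIn w (((List.range e).map u).flatten)) :
    (∀ i < e, (tauStar k N (u i)).length = N * m) ∧
    (∀ i < e, KAbEq k (tauStar k N (u i)) (tauStar k N (u 0))) ∧
    OccursIn (tauWord k N w) (((List.range e).map fun i => tauStar k N (u i)).flatten) :=
  tau_image_of_abelian_power_is_kAbelian_power_general k N hk hN w e m u hlen hab hocc
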